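/- Let n ≥ 2 and for x ∈ ℝⁿ define the symmetric (n+1)×(n+1) arrow matrix A(x) with A(x)₀₀ = E₁(x), A(x)₀ᵢ = A(x)ᵢ₀ = xᵢ for 1 ≤ i ≤ n, A(x)ᵢᵢ = E₁(x) for 1 ≤ i ≤ n, and all other entries 0, where E₁(x) = x₁ + ⋯ + xₙ. Then det A(x) = 2 · E₁(x)^{n−1} · E₂(x) as a polynomial identity, and A(𝟙) is positive definite. (Thus E₁^{n−1}E₂ has a symmetric determinantal representation that is positive definite at 𝟙.) -/

import Mathlib

/-!
Reindex `A(x)` as the matrix `[[s, xᵀ], [x, s·I]]` with `s = E₁(x)`, bordered by one row and one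
column. Multiplying a bordered matrix `[[a, uᵀ], [v, d·I]]` on the right by `[[d, 0], [-v, I]]`
(determinant `d`) makes it block upper triangular, so `det · d = (a d - u ⬝ v) dⁿ`. Over `R[X]`
with `d = X` the factor `X` cancels, giving `det = (a d - u ⬝ v) dⁿ⁻¹` for every `d`; for `A(x)`
this is `E₁^{n-1} (E₁² - Σ xᵢ²) = 2 E₁^{n-1} E₂` by Newton's identity.

For `u = v` the quadratic form satisfies
`d · (a c² + 2c (u ⬝ z) + d |z|²) = (a d - |u|²) c² + |c u + d z|²`, so the bordered matrix is
positive definite as soon as `d > 0` and `|u|² < a d`; at `x = 𝟙` this reads `n < n²`.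
-/

/-- The second elementary symmetric function of `x : Fin n → ℝ`. -/
noncomputable def esymm2 {n : ℕ} (x : Fin n → ℝ) : ℝ :=
  ∑ s ∈ Finset.powersetCard 2 (Finset.univ : Finset (Fin n)), ∏ i ∈ s, x i

/-- The symmetric `(n+1) × (n+1)` arrow matrix with `A(x)₀₀ = E₁(x)`,
`A(x)₀ᵢ = A(x)ᵢ₀ = xᵢ`, `A(x)ᵢᵢ = E₁(x)` for `1 ≤ i ≤ n` and zeros elsewhere. -/
noncomputable def arrow (n : ℕ) (x : Fin n → ℝ) : Matrix (Fin (n + 1)) (Fin (n + 1)) ℝ :=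
  Matrix.of fun i j =>
    if hi : i = 0 then (if hj : j = 0 then ∑ t, x t else x (j.pred hj))
    else if hj : j = 0 then x (i.pred hi)
    else if i = j then ∑ t, x t else 0

open Matrix

theorem Finset.two_mul_sum_powersetCard_two {σ R : Type*} [Fintype σ] [CommRing R]
    (x : σ → R) :
    2 * ∑ s ∈ powersetCard 2 univ, ∏ i ∈ s, x i = (∑ i, x i) ^ 2 - ∑ i, x i ^ 2 := by
  have newton := congrArg (MvPolynomial.aeval x) (MvPolynomial.mul_esymm_eq_sum σ R 2)
  simp [MvPolynomial.esymm, MvPolynomial.psum, powersetCard_one,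
    Nat.sum_antidiagonal_eq_sum_range_succ_mk, sum_range_succ] at newton
  linear_combination newton

namespace Matrix

variable {R ι : Type*} [CommRing R] [Fintype ι] [DecidableEq ι]

def borderedScalar (a d : R) (u v : ι → R) : Matrix (Unit ⊕ ι) (Unit ⊕ ι) R :=
  fromBlocks (of fun _ _ => a) (replicateRow Unit u) (replicateCol Unit v) (d • 1)

theorem det_borderedScalar_mul (a d : R) (u v : ι → R) :
    (borderedScalar a d u v).det * d = (a * d - u ⬝ᵥ v) * d ^ Fintype.card ι := by
  set L := fromBlocks (of fun _ _ => d) 0 (-replicateCol Unit v) (1 : Matrix ι ι R)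
  have hprod : borderedScalar a d u v * L =
      fromBlocks (of fun _ _ => a * d - u ⬝ᵥ v) (replicateRow Unit u) 0 (d • 1) := by
    ext (_ | i) (_ | j) <;>
      simp [L, borderedScalar, mul_apply, one_apply, dotProduct, sub_eq_add_neg, mul_comm]
  calc (borderedScalar a d u v).det * d = (borderedScalar a d u v).det * L.det := by simp [L]
    _ = _ := by rw [← det_mul, hprod, det_fromBlocks_zero₂₁]; simp

theorem borderedScalar_map {S : Type*} [CommRing S] (f : R →+* S) (a d : R) (u v : ι → R) :
    f.mapMatrix (borderedScalar a d u v) = borderedScalar (f a) (f d) (f ∘ u) (f ∘ v) := by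
  ext (_ | i) (_ | j) <;> simp [borderedScalar, one_apply, apply_ite f]

open Polynomial in
theorem det_borderedScalar [Nonempty ι] (a d : R) (u v : ι → R) :
    (borderedScalar a d u v).det = (a * d - u ⬝ᵥ v) * d ^ (Fintype.card ι - 1) := by
  have hX := det_borderedScalar_mul (C a) X (C ∘ u) (C ∘ v)
  rw [← Nat.sub_add_cancel Fintype.card_pos, pow_succ, ← mul_assoc] at hX
  have hd := congrArg (evalRingHom d) (isRegular_X.right hX)
  rw [RingHom.map_det, borderedScalar_map] at hd
  simpa [Function.comp_def, dotProduct, eval_finsetSum] using hd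

theorem borderedScalar_mulVec (a d c : R) (u v z : ι → R) :
    borderedScalar a d u v *ᵥ Sum.elim (fun _ => c) z =
      Sum.elim (fun _ => a * c + u ⬝ᵥ z) (c • v + d • z) := by
  ext (_ | i) <;> simp [borderedScalar, mulVec, dotProduct, one_apply, mul_comm]

theorem dotProduct_borderedScalar_mulVec (a d c : R) (u z : ι → R) :
    Sum.elim (fun _ => c) z ⬝ᵥ (borderedScalar a d u u *ᵥ Sum.elim (fun _ => c) z) =
      a * c ^ 2 + 2 * c * (u ⬝ᵥ z) + d * (z ⬝ᵥ z) := by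
  rw [borderedScalar_mulVec, sumElim_dotProduct_sumElim]
  simp only [dotProduct_pUnit, dotProduct_add, dotProduct_smul, smul_eq_mul, dotProduct_comm z u]
  ring

theorem posDef_borderedScalar [LinearOrder R] [IsStrictOrderedRing R] [StarRing R]
    [TrivialStar R] {a d : R} {u : ι → R} (hd : 0 < d) (hu : u ⬝ᵥ u < a * d) :
    (borderedScalar a d u u).PosDef := by
  rw [posDef_iff_dotProduct_mulVec]
  refine ⟨?_, fun y hy => ?_⟩
  · ext (_ | i) (_ | j) <;> simp [borderedScalar, one_apply, eq_comm]
  set c := y (Sum.inl ())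
  set z := y ∘ Sum.inr
  have hyz : y = Sum.elim (fun _ => c) z := by ext (_ | i) <;> rfl
  have hsos : d * (a * c ^ 2 + 2 * c * (u ⬝ᵥ z) + d * (z ⬝ᵥ z)) =
      (a * d - u ⬝ᵥ u) * c ^ 2 + (c • u + d • z) ⬝ᵥ (c • u + d • z) := by
    simp only [add_dotProduct, dotProduct_add, smul_dotProduct, dotProduct_smul, smul_eq_mul,
      dotProduct_comm z u]
    ring
  have hnonneg (w : ι → R) : 0 ≤ w ⬝ᵥ w := Finset.sum_nonneg fun i _ => mul_self_nonneg (w i)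
  rw [star_trivial, hyz, dotProduct_borderedScalar_mulVec]
  refine pos_of_mul_pos_right (hsos ▸ ?_) hd.le
  rcases eq_or_ne c 0 with hc | hc
  · have hz : z ≠ 0 := by
      rintro hz
      exact hy (by rw [hyz, hc, hz]; ext (_ | i) <;> rfl)
    have hdz : 0 < (d • z) ⬝ᵥ (d • z) :=
      (hnonneg _).lt_of_ne' (dotProduct_self_eq_zero.not.mpr (smul_ne_zero hd.ne' hz))
    simpa [hc] using hdz
  · exact add_pos_of_pos_of_nonneg (mul_pos (sub_pos.mpr hu) (by positivity)) (hnonneg _)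

end Matrix

def finSuccEquivUnitSum (n : ℕ) : Fin (n + 1) ≃ Unit ⊕ Fin n :=
  (finSuccEquiv n).trans ((Equiv.optionEquivSumPUnit _).trans (Equiv.sumComm _ _))

@[simp] theorem finSuccEquivUnitSum_zero (n : ℕ) : finSuccEquivUnitSum n 0 = Sum.inl () := rfl

@[simp] theorem finSuccEquivUnitSum_succ {n : ℕ} (i : Fin n) :
    finSuccEquivUnitSum n i.succ = Sum.inr i := rfl

theorem arrow_eq_submatrix_borderedScalar (n : ℕ) (x : Fin n → ℝ) :
    arrow n x = (borderedScalar (∑ t, x t) (∑ t, x t) x x).submatrix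
      (finSuccEquivUnitSum n) (finSuccEquivUnitSum n) := by
  ext i j
  cases i using Fin.cases <;> cases j using Fin.cases <;>
    simp [arrow, borderedScalar, one_apply, Fin.succ_ne_zero]

theorem stmt13 {n : ℕ} (hn : 2 ≤ n) :
    (∀ x : Fin n → ℝ,
      (arrow n x).det = 2 * (∑ i, x i) ^ (n - 1) * esymm2 x) ∧
    (arrow n (fun _ => 1)).PosDef := by
  have : Nonempty (Fin n) := ⟨⟨0, by omega⟩⟩
  refine ⟨fun x => ?_, ?_⟩
  · have newton : 2 * esymm2 x = (∑ i, x i) ^ 2 - ∑ i, x i ^ 2 :=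
      Finset.two_mul_sum_powersetCard_two x
    have hsq : x ⬝ᵥ x = ∑ i, x i ^ 2 := by simp [dotProduct, sq]
    rw [arrow_eq_submatrix_borderedScalar, det_submatrix_equiv_self, det_borderedScalar,
      Fintype.card_fin]
    linear_combination -(∑ i, x i) ^ (n - 1) * (newton + hsq)
  · rw [arrow_eq_submatrix_borderedScalar]
    refine (posDef_borderedScalar ?_ ?_).submatrix (Equiv.injective _)
    · simpa using (show (0 : ℝ) < n by positivity)
    · simpa [dotProduct] using lt_mul_self (show (1 : ℝ) < n by exact_mod_cast hn)
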